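/- Let ψ_{n,m}(t) = 2^{k/2} * (1/sqrt(n! * 2^n * sqrt(π))) * H_m(2^k t - (2n-1)) * χ_{[(2n-2)/2^k, 2n/2^k)}(t) be the Hermite wavelet on [0,1]. If f : [0,1] → ℝ is measurable with |f(t)| ≤ η for all t ∈ [0,1], then the coefficient c_{nm} = ∫_0^1 f(t) ψ_{n,m}(t) dt satisfies |c_{nm}| ≤ 2^{-k/2} * η * h / (sqrt(n! * 2^n * sqrt(π)) * (m+1)), where h = ∫_{-1}^1 |H_{m+1}'(y)| dy. -/

import Mathlib

open Real

noncomputable def hermiteH : ℕ → ℝ → ℝ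
  | 0, _ => 1
  | 1, t => 2 * t
  | (m + 2), t => 2 * t * hermiteH (m + 1) t - 2 * (m + 1) * hermiteH m t

/-- The Hermite wavelet `ψ_{n,m}` at resolution level `k` on `[0,1]`. -/
noncomputable def hermiteWavelet (k n m : ℕ) (t : ℝ) : ℝ :=
  if t ∈ Set.Ico (((2 : ℝ) * n - 2) / 2 ^ k) ((2 * n) / 2 ^ k) then
    (2 : ℝ) ^ ((k : ℝ) / 2) * (1 / Real.sqrt (n.factorial * 2 ^ n * Real.sqrt π)) *
      hermiteH m (2 ^ k * t - (2 * n - 1))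
  else 0

open MeasureTheory Set

/-! Since `|f| ≤ η` on `[0,1]`, `|c_{nm}| ≤ η ∫ |ψ_{n,m}|`. The substitution
`y = 2^k t - (2n-1)` maps the support of `ψ_{n,m}` onto `[-1,1)` and turns the right-hand side
into `2^{-k/2} η ∫_{-1}^1 |H_m| / √(n! 2^n √π)`, while `H_{m+1}' = 2(m+1) H_m` gives
`∫_{-1}^1 |H_{m+1}'| = 2(m+1) ∫_{-1}^1 |H_m|`; so the bound even holds with an extra factor `1/2`.
-/

theorem abs_intervalIntegral_mul_le_of_abs_le {f g : ℝ → ℝ} {a b η : ℝ} (hab : a ≤ b)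
    (hg : Integrable g) (hf : ∀ t ∈ Icc a b, |f t| ≤ η) :
    |∫ t in a..b, f t * g t| ≤ η * ∫ t, |g t| := by
  have hη : 0 ≤ η := (abs_nonneg _).trans (hf a ⟨le_rfl, hab⟩)
  calc |∫ t in a..b, f t * g t|
      ≤ ∫ t in a..b, η * |g t| := by
        rw [← Real.norm_eq_abs]
        refine intervalIntegral.norm_integral_le_of_norm_le hab
          (ae_of_all _ fun t ht => ?_) (hg.abs.const_mul η).intervalIntegrable
        rw [Real.norm_eq_abs, abs_mul]
        exact mul_le_mul_of_nonneg_right (hf t (Ioc_subset_Icc_self ht)) (abs_nonneg _)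
    _ ≤ η * ∫ t, |g t| := by
        rw [intervalIntegral.integral_const_mul, intervalIntegral.integral_of_le hab]
        exact mul_le_mul_of_nonneg_left
          (setIntegral_le_integral hg.abs (ae_of_all _ fun t => abs_nonneg _)) hη

lemma hermiteH_zero : hermiteH 0 = fun _ => 1 := rfl

lemma hermiteH_one : hermiteH 1 = fun t => 2 * t := rfl

lemma hermiteH_add_two (m : ℕ) :
    hermiteH (m + 2) = fun t => 2 * t * hermiteH (m + 1) t - 2 * (m + 1) * hermiteH m t := rfl

theorem hasDerivAt_hermiteH_succ :
    ∀ (m : ℕ) (y : ℝ), HasDerivAt (hermiteH (m + 1)) (2 * (m + 1) * hermiteH m y) y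
  | 0, y => by
    simpa [hermiteH_one, hermiteH_zero] using (hasDerivAt_id' y).const_mul 2
  | 1, y => by
    rw [hermiteH_add_two 0]
    have h₀ : HasDerivAt (hermiteH 0) 0 y := hasDerivAt_const y 1
    have hd := (((hasDerivAt_id' y).const_mul 2).mul (hasDerivAt_hermiteH_succ 0 y)).sub
      (h₀.const_mul (2 * ((0 : ℕ) + 1 : ℝ)))
    exact hd.congr_deriv (by simp [hermiteH_one, hermiteH_zero]; ring)
  | m + 2, y => by
    rw [hermiteH_add_two (m + 1)]
    have hd := (((hasDerivAt_id' y).const_mul 2).mul (hasDerivAt_hermiteH_succ (m + 1) y)).sub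
      ((hasDerivAt_hermiteH_succ m y).const_mul (2 * ((m + 1 : ℕ) + 1 : ℝ)))
    exact hd.congr_deriv (by rw [hermiteH_add_two]; push_cast; ring)

@[fun_prop]
theorem continuous_hermiteH : ∀ m, Continuous (hermiteH m)
  | 0 => continuous_const
  | m + 1 => continuous_iff_continuousAt.2 fun y => (hasDerivAt_hermiteH_succ m y).continuousAt

theorem integral_abs_deriv_hermiteH_succ (m : ℕ) (a b : ℝ) :
    ∫ y in a..b, |deriv (hermiteH (m + 1)) y| = 2 * (m + 1) * ∫ y in a..b, |hermiteH m y| := by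
  have hderiv : deriv (hermiteH (m + 1)) = fun y => 2 * (m + 1) * hermiteH m y :=
    funext fun y => (hasDerivAt_hermiteH_succ m y).deriv
  simp_rw [hderiv, abs_mul (2 * ((m : ℝ) + 1)),
    abs_of_pos (by positivity : (0 : ℝ) < 2 * (m + 1))]
  exact intervalIntegral.integral_const_mul _ _

section Wavelet

variable (k n m : ℕ)

theorem hermiteWavelet_eq_indicator :
    hermiteWavelet k n m = (Ico (((2 : ℝ) * n - 2) / 2 ^ k) ((2 * n) / 2 ^ k)).indicator
      fun t => (2 : ℝ) ^ ((k : ℝ) / 2) * (1 / √(n.factorial * 2 ^ n * √π)) *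
        hermiteH m (2 ^ k * t - (2 * n - 1)) := by
  funext t
  simp only [hermiteWavelet, indicator]

theorem integrable_hermiteWavelet : Integrable (hermiteWavelet k n m) := by
  rw [hermiteWavelet_eq_indicator]
  refine IntegrableOn.integrable_indicator ?_ measurableSet_Ico
  exact (Continuous.integrableOn_Icc (by fun_prop)).mono_set Ico_subset_Icc_self

theorem integral_abs_hermiteWavelet :
    ∫ t, |hermiteWavelet k n m t| =
      (2 : ℝ) ^ (-(k : ℝ) / 2) / √(n.factorial * 2 ^ n * √π) *
        ∫ y in (-1 : ℝ)..1, |hermiteH m y| := by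
  have h2k : (2 : ℝ) ^ k ≠ 0 := by positivity
  have hab : ((2 : ℝ) * n - 2) / 2 ^ k ≤ (2 * n) / 2 ^ k := by gcongr; linarith
  simp_rw [← Real.norm_eq_abs, hermiteWavelet_eq_indicator, norm_indicator_eq_indicator_norm]
  rw [integral_indicator measurableSet_Ico, integral_Ico_eq_integral_Ioc,
    ← intervalIntegral.integral_of_le hab]
  simp_rw [norm_mul, Real.norm_eq_abs]
  rw [intervalIntegral.integral_const_mul,
    intervalIntegral.integral_comp_mul_sub (fun y => |hermiteH m y|) h2k]
  have hlo : (2 : ℝ) ^ k * ((2 * n - 2) / 2 ^ k) - (2 * n - 1) = -1 := by field_simp; ring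
  have hhi : (2 : ℝ) ^ k * (2 * n / 2 ^ k) - (2 * n - 1) = 1 := by field_simp; ring
  have hpow : (2 : ℝ) ^ ((k : ℝ) / 2) * ((2 : ℝ) ^ k)⁻¹ = (2 : ℝ) ^ (-(k : ℝ) / 2) := by
    rw [← Real.rpow_natCast, ← Real.rpow_neg zero_le_two, ← Real.rpow_add zero_lt_two]
    ring_nf
  rw [hlo, hhi, smul_eq_mul, abs_of_nonneg (by positivity), abs_of_nonneg (by positivity), ← hpow]
  ring

end Wavelet

theorem hermite_wavelet_coeff_bound_general (k n m : ℕ) (f : ℝ → ℝ) (η : ℝ)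
    (hη : ∀ t ∈ Set.Icc (0 : ℝ) 1, |f t| ≤ η) :
    |∫ t in (0 : ℝ)..1, f t * hermiteWavelet k n m t| ≤
      (2 : ℝ) ^ (-(k : ℝ) / 2) * η * (∫ y in (-1 : ℝ)..1, |deriv (hermiteH (m + 1)) y|) /
        (Real.sqrt (n.factorial * 2 ^ n * Real.sqrt π) * (m + 1)) := by
  set I := ∫ y in (-1 : ℝ)..1, |hermiteH m y| with hI_def
  have hη0 : 0 ≤ η := (abs_nonneg _).trans (hη 0 ⟨le_rfl, zero_le_one⟩)
  have hI : 0 ≤ I := intervalIntegral.integral_nonneg (by norm_num) fun y _ => abs_nonneg _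
  calc |∫ t in (0 : ℝ)..1, f t * hermiteWavelet k n m t|
      ≤ η * ∫ t, |hermiteWavelet k n m t| :=
        abs_intervalIntegral_mul_le_of_abs_le zero_le_one (integrable_hermiteWavelet k n m) hη
    _ = (2 : ℝ) ^ (-(k : ℝ) / 2) * η * I / √(n.factorial * 2 ^ n * √π) := by
        rw [integral_abs_hermiteWavelet]; ring
    _ ≤ _ := by
        rw [integral_abs_deriv_hermiteH_succ, ← hI_def]
        field_simp
        linarith [mul_nonneg hη0 hI]

theorem hermite_wavelet_coeff_bound (k n m : ℕ) (hk : 1 ≤ k) (hn1 : 1 ≤ n)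
    (hn2 : n ≤ 2 ^ (k - 1)) (f : ℝ → ℝ) (hf : Measurable f) (η : ℝ)
    (hη : ∀ t ∈ Set.Icc (0 : ℝ) 1, |f t| ≤ η) :
    |∫ t in (0 : ℝ)..1, f t * hermiteWavelet k n m t| ≤
      (2 : ℝ) ^ (-(k : ℝ) / 2) * η * (∫ y in (-1 : ℝ)..1, |deriv (hermiteH (m + 1)) y|) /
        (Real.sqrt (n.factorial * 2 ^ n * Real.sqrt π) * (m + 1)) :=
  hermite_wavelet_coeff_bound_general k n m f η hη
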